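/- Let d be an odd prime and s, t ∈ Z_d. Define c_{j,r} = 1/d if r = s·j + t (in Z_d) and c_{j,r} = 0 otherwise, and set ρ = Σ_{j,r} c_{j,r} P̃_{j,r}. Then ρ is separable; moreover d·ρ is an orthogonal projection of rank d. -/

import Mathlib

open Matrix Kronecker
open scoped ComplexOrder

/-- `η = exp(2πi/d)`. -/
noncomputable def eta (d : ℕ) : ℂ := Complex.exp (2 * Real.pi * Complex.I / d)

/-- The maximally entangled vector `|Ω_{j,k}⟩ = (S_{j,k} ⊗ I) Σ_u |u⟩|u⟩
    = Σ_m η^{jm} |m⟩|m+k⟩`. -/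
noncomputable def Omega (d : ℕ) (j k : ZMod d) : ZMod d × ZMod d → ℂ :=
  fun uv => if uv.2 = uv.1 + k then eta d ^ (j.val * uv.1.val) else 0

/-- The rank-one projection `P̃_{j,k} = (1/d)|Ω_{j,k}⟩⟨Ω_{j,k}|`. -/
noncomputable def Ptilde (d : ℕ) (j k : ZMod d) :
    Matrix (ZMod d × ZMod d) (ZMod d × ZMod d) ℂ :=
  (d : ℂ)⁻¹ • Matrix.vecMulVec (Omega d j k) (star (Omega d j k))

/-- A bipartite density on `C^d ⊗ C^d` is separable if it is a finite convex
combination of Kronecker products of `d×d` densities. -/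
def IsSeparableState {d : ℕ} [NeZero d]
    (ρ : Matrix (ZMod d × ZMod d) (ZMod d × ZMod d) ℂ) : Prop :=
  ∃ (n : ℕ) (w : Fin n → ℝ) (σ τ : Fin n → Matrix (ZMod d) (ZMod d) ℂ),
    (∀ i, 0 ≤ w i) ∧ (∑ i, w i = 1) ∧
    (∀ i, (σ i).PosSemidef ∧ (σ i).trace = 1) ∧
    (∀ i, (τ i).PosSemidef ∧ (τ i).trace = 1) ∧
    ρ = ∑ i, (w i : ℂ) • (σ i ⊗ₖ τ i)


/-!
The vectors `Ω_{j, sj+t}` are pairwise orthogonal with squared norm `d`, so the matrix `B` having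
them as columns satisfies `Bᴴ B = d • 1` while `ρ = d⁻² • B Bᴴ`; hence `d • ρ = d⁻¹ • B Bᴴ` is an
orthogonal projection whose rank is that of `Bᴴ B`, namely `d`.

For separability compare entries. If `s = 0` then `ρ = d⁻¹ Σ_a |a⟩⟨a| ⊗ |a+t⟩⟨a+t|`. If `s ≠ 0`,
the entry `ρ_{x,y}` vanishes unless `x₂ - x₁ = y₂ - y₁`, and is then a phase which, because `2` is
invertible mod `d`, splits as a difference of quadratic phases in `x₁, y₁` and in `x₂, y₂`;
averaging products of quadratic-phase states over a Fourier shift `a` produces exactly this.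
-/

open Finset

local notation "χ" => ZMod.stdAddChar

def IsDensityMatrix {n : Type*} [Fintype n] (σ : Matrix n n ℂ) : Prop :=
  σ.PosSemidef ∧ σ.trace = 1

lemma isSeparableState_uniform_mixture {d : ℕ} [NeZero d] {ι : Type*} [Fintype ι] [Nonempty ι]
    {σ τ : ι → Matrix (ZMod d) (ZMod d) ℂ} (hσ : ∀ i, IsDensityMatrix (σ i))
    (hτ : ∀ i, IsDensityMatrix (τ i)) :
    IsSeparableState ((Fintype.card ι : ℂ)⁻¹ • ∑ i, σ i ⊗ₖ τ i) := by
  let e := Fintype.equivFin ι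
  refine ⟨Fintype.card ι, fun _ => (Fintype.card ι : ℝ)⁻¹, σ ∘ e.symm, τ ∘ e.symm,
    fun _ => by positivity, ?_, fun i => hσ _, fun i => hτ _, ?_⟩
  · simp [card_univ]
  · rw [smul_sum, ← e.symm.sum_comp]
    simp

lemma isDensityMatrix_single {n : Type*} [Fintype n] [DecidableEq n] (a : n) :
    IsDensityMatrix (single a a (1 : ℂ)) :=
  ⟨diagonal_single a (1 : ℂ) ▸ PosSemidef.diagonal (Pi.single_nonneg.mpr zero_le_one),
    trace_single_eq_same a 1⟩

section TightFrame

variable {m n : Type*} [Fintype n]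

lemma mul_conjTranspose_eq_sum_vecMulVec (B : Matrix m n ℂ) :
    B * Bᴴ = ∑ j, vecMulVec (fun i => B i j) (star fun i => B i j) := by
  ext x y
  simp [mul_apply, Matrix.sum_apply, vecMulVec_apply]

lemma isHermitian_inv_smul_mul_conjTranspose (B : Matrix m n ℂ) (c : ℝ) :
    ((c : ℂ)⁻¹ • (B * Bᴴ)).IsHermitian :=
  (isHermitian_mul_conjTranspose_self B).smul (by simp [IsSelfAdjoint, Complex.conj_ofReal])

variable [Fintype m] [DecidableEq n] {B : Matrix m n ℂ} {c : ℝ}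

lemma isIdempotentElem_inv_smul_mul_conjTranspose (hB : Bᴴ * B = (c : ℂ) • 1) (hc : c ≠ 0) :
    IsIdempotentElem ((c : ℂ)⁻¹ • (B * Bᴴ)) := by
  have hc' : (c : ℂ) ≠ 0 := Complex.ofReal_ne_zero.mpr hc
  rw [IsIdempotentElem, smul_mul_smul_comm, Matrix.mul_assoc, ← Matrix.mul_assoc Bᴴ, hB,
    Matrix.smul_mul, Matrix.one_mul, Matrix.mul_smul, smul_smul, inv_mul_cancel_right₀ hc']

lemma rank_inv_smul_mul_conjTranspose (hB : Bᴴ * B = (c : ℂ) • 1) (hc : c ≠ 0) :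
    ((c : ℂ)⁻¹ • (B * Bᴴ)).rank = Fintype.card n := by
  have hc' : (c : ℂ) ≠ 0 := Complex.ofReal_ne_zero.mpr hc
  rw [rank_smul_of_mem_nonZeroDivisors _ (mem_nonZeroDivisors_of_ne_zero (inv_ne_zero hc')),
    rank_self_mul_conjTranspose, ← rank_conjTranspose_mul_self, hB,
    rank_smul_of_mem_nonZeroDivisors _ (mem_nonZeroDivisors_of_ne_zero hc'), rank_one]

end TightFrame

variable {d : ℕ} [NeZero d]

section Character

lemma eta_pow_eq_stdAddChar (n : ℕ) : eta d ^ n = χ (n : ZMod d) := by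
  rw [ZMod.stdAddChar_apply, ZMod.toCircle_natCast, eta, ← Complex.exp_nat_mul]
  ring_nf

lemma star_stdAddChar (x : ZMod d) : star (χ x) = χ (-x) :=
  (AddChar.map_neg_eq_conj _ x).symm

lemma sum_stdAddChar_mul (c : ZMod d) :
    ∑ m : ZMod d, χ (c * m) = if c = 0 then (d : ℂ) else 0 := by
  simpa [mul_comm c] using AddChar.sum_mulShift c (ZMod.isPrimitive_stdAddChar d)

end Character

section Omega

lemma Omega_apply (j k : ZMod d) (x : ZMod d × ZMod d) :
    Omega d j k x = if x.2 = x.1 + k then χ (j * x.1) else 0 := by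
  simp [Omega, eta_pow_eq_stdAddChar]

lemma star_Omega_dotProduct_Omega (j k j' k' : ZMod d) :
    star (Omega d j k) ⬝ᵥ Omega d j' k' = if j = j' ∧ k = k' then (d : ℂ) else 0 := by
  have hinner (m : ZMod d) : ∑ n : ZMod d, star (Omega d j k (m, n)) * Omega d j' k' (m, n) =
      if k = k' then χ ((j' - j) * m) else 0 := by
    simp only [Omega_apply, apply_ite star, star_stdAddChar, star_zero, ite_mul, mul_ite,
      zero_mul, mul_zero, sum_ite_eq', mem_univ, if_true, add_right_inj]
    simp_rw [← AddChar.map_add_eq_mul, eq_comm (a := k')]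
    ring_nf
  rw [dotProduct, Fintype.sum_prod_type]
  simp only [Pi.star_apply, hinner]
  by_cases hk : k = k' <;> simp [hk, sum_stdAddChar_mul, sub_eq_zero, eq_comm]

end Omega

section LineFrame

noncomputable def lineFrame (d : ℕ) (s t : ZMod d) : Matrix (ZMod d × ZMod d) (ZMod d) ℂ :=
  of fun x j => Omega d j (s * j + t) x

lemma sum_ite_smul_Ptilde_eq_lineFrame (s t : ZMod d) :
    ∑ j : ZMod d, ∑ r : ZMod d, (if r = s * j + t then (d : ℂ)⁻¹ else 0) • Ptilde d j r
      = ((d : ℂ) ^ 2)⁻¹ • (lineFrame d s t * (lineFrame d s t)ᴴ) := by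
  simp only [Ptilde, smul_smul, ite_mul, zero_mul, ite_smul, zero_smul, sum_ite_eq', mem_univ,
    if_true, ← smul_sum, mul_conjTranspose_eq_sum_vecMulVec, lineFrame, of_apply, sq, mul_inv]

lemma conjTranspose_lineFrame_mul_self (s t : ZMod d) :
    (lineFrame d s t)ᴴ * lineFrame d s t = ((d : ℝ) : ℂ) • 1 := by
  ext j j'
  rw [mul_apply, Matrix.smul_apply, one_apply]
  refine (star_Omega_dotProduct_Omega j (s * j + t) j' (s * j' + t)).trans ?_
  by_cases hj : j = j' <;> simp [hj]

lemma lineFrame_mul_conjTranspose_apply (s t : ZMod d) (x y : ZMod d × ZMod d) :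
    (lineFrame d s t * (lineFrame d s t)ᴴ) x y =
      ∑ j, if x.2 = x.1 + (s * j + t) ∧ y.2 = y.1 + (s * j + t) then χ ((x.1 - y.1) * j)
        else 0 := by
  refine sum_congr rfl fun j _ => ?_
  simp only [conjTranspose_apply, lineFrame, of_apply, Omega_apply]
  by_cases hx : x.2 = x.1 + (s * j + t) <;> by_cases hy : y.2 = y.1 + (s * j + t) <;>
    simp only [hx, hy, star_stdAddChar, ← AddChar.map_add_eq_mul, if_true, if_false, and_true,
      and_false, star_zero, mul_zero, zero_mul]
  ring_nf

lemma lineFrame_zero_mul_conjTranspose_apply (t : ZMod d) (x y : ZMod d × ZMod d) :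
    (lineFrame d 0 t * (lineFrame d 0 t)ᴴ) x y =
      if x.1 = y.1 ∧ x.2 = x.1 + t ∧ y.2 = y.1 + t then (d : ℂ) else 0 := by
  rw [lineFrame_mul_conjTranspose_apply]
  by_cases h : x.2 = x.1 + t ∧ y.2 = y.1 + t <;>
    simp [h, sum_stdAddChar_mul, sub_eq_zero, and_comm]

lemma lineFrame_mul_conjTranspose_apply_of_ne_zero [Fact d.Prime] {s : ZMod d} (hs : s ≠ 0)
    (t : ZMod d) (x y : ZMod d × ZMod d) :
    (lineFrame d s t * (lineFrame d s t)ᴴ) x y =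
      if y.2 = y.1 + (x.2 - x.1) then χ ((x.1 - y.1) * (s⁻¹ * (x.2 - x.1 - t))) else 0 := by
  set j₀ := s⁻¹ * (x.2 - x.1 - t)
  have hj₀ : s * j₀ + t = x.2 - x.1 := by rw [mul_inv_cancel_left₀ hs]; ring
  have hx (j : ZMod d) : x.2 = x.1 + (s * j + t) ↔ j = j₀ := by
    rw [eq_inv_mul_iff_mul_eq₀ hs]
    constructor <;> intro h <;> linear_combination -h
  simp only [lineFrame_mul_conjTranspose_apply, hx, ite_and, sum_ite_eq', mem_univ, if_true, hj₀]

end LineFrame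

section PhaseState

noncomputable def phaseState (f : ZMod d → ZMod d) : Matrix (ZMod d) (ZMod d) ℂ :=
  (d : ℂ)⁻¹ • vecMulVec (fun m => χ (f m)) (star fun m => χ (f m))

lemma phaseState_apply (f : ZMod d → ZMod d) (u v : ZMod d) :
    phaseState f u v = (d : ℂ)⁻¹ * χ (f u - f v) := by
  rw [phaseState, Matrix.smul_apply, vecMulVec_apply, Pi.star_apply, star_stdAddChar,
    ← AddChar.map_add_eq_mul, sub_eq_add_neg, smul_eq_mul]

lemma isDensityMatrix_phaseState (f : ZMod d → ZMod d) : IsDensityMatrix (phaseState f) := by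
  refine ⟨(posSemidef_vecMulVec_self_star _).smul (by positivity), ?_⟩
  have hd : (d : ℂ) ≠ 0 := Nat.cast_ne_zero.mpr (NeZero.ne d)
  simp [trace, phaseState_apply, ZMod.card, hd]

lemma sum_phaseState_kronecker_apply (f g : ZMod d → ZMod d) (x y : ZMod d × ZMod d) :
    (∑ a, phaseState (fun m => f m + a * m) ⊗ₖ phaseState (fun n => g n - a * n)) x y =
      (d : ℂ)⁻¹ * if x.1 - y.1 = x.2 - y.2 then χ (f x.1 - f y.1 + (g x.2 - g y.2)) else 0 := by
  have hterm (a : ZMod d) :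
      (phaseState (fun m => f m + a * m) ⊗ₖ phaseState (fun n => g n - a * n)) x y =
        ((d : ℂ) ^ 2)⁻¹ * χ (f x.1 - f y.1 + (g x.2 - g y.2)) *
          χ ((x.1 - y.1 - (x.2 - y.2)) * a) := by
    rw [kroneckerMap_apply, phaseState_apply, phaseState_apply, mul_mul_mul_comm,
      ← AddChar.map_add_eq_mul, mul_assoc ((d : ℂ) ^ 2)⁻¹, ← AddChar.map_add_eq_mul, ← mul_inv,
      ← sq]
    congr 2
    ring
  simp only [Matrix.sum_apply, hterm, ← mul_sum, sum_stdAddChar_mul, sub_eq_zero]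
  split_ifs
  · field_simp
  · simp

end PhaseState

section Separability

lemma isSeparableState_lineFrame_zero (t : ZMod d) :
    IsSeparableState (((d : ℂ) ^ 2)⁻¹ • (lineFrame d 0 t * (lineFrame d 0 t)ᴴ)) := by
  convert isSeparableState_uniform_mixture (fun a => isDensityMatrix_single a)
    (fun a => isDensityMatrix_single (a + t)) using 1
  ext ⟨x₁, x₂⟩ ⟨y₁, y₂⟩
  have hsupport (a : ZMod d) : ((a, a + t) = (x₁, x₂) ∧ (a, a + t) = (y₁, y₂)) ↔
      a = x₁ ∧ x₁ = y₁ ∧ x₂ = x₁ + t ∧ y₂ = y₁ + t := by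
    simp only [Prod.mk.injEq]
    constructor
    · rintro ⟨⟨rfl, rfl⟩, rfl, rfl⟩
      exact ⟨rfl, rfl, rfl, rfl⟩
    · rintro ⟨rfl, rfl, rfl, rfl⟩
      exact ⟨⟨rfl, rfl⟩, rfl, rfl⟩
  simp only [Matrix.smul_apply, lineFrame_zero_mul_conjTranspose_apply, Matrix.sum_apply,
    single_kronecker_single, single_apply, hsupport, ite_and, sum_ite_eq', mem_univ, if_true,
    ZMod.card, smul_eq_mul, mul_one]
  split_ifs
  · field_simp
  all_goals simp

lemma isSeparableState_lineFrame_of_ne_zero [Fact d.Prime] (h2 : (2 : ZMod d) ≠ 0) {s : ZMod d}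
    (hs : s ≠ 0) (t : ZMod d) :
    IsSeparableState (((d : ℂ) ^ 2)⁻¹ • (lineFrame d s t * (lineFrame d s t)ᴴ)) := by
  obtain ⟨q, hq⟩ : ∃ q : ZMod d, 2 * q = s⁻¹ :=
    ⟨2⁻¹ * s⁻¹, by rw [← mul_assoc, mul_inv_cancel₀ h2, one_mul]⟩
  convert isSeparableState_uniform_mixture
    (fun a => isDensityMatrix_phaseState (fun m => -(q * m ^ 2) - s⁻¹ * t * m + a * m))
    (fun a => isDensityMatrix_phaseState (fun n => q * n ^ 2 - a * n)) using 1
  ext ⟨x₁, x₂⟩ ⟨y₁, y₂⟩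
  rw [Matrix.smul_apply, Matrix.smul_apply, lineFrame_mul_conjTranspose_apply_of_ne_zero hs,
    sum_phaseState_kronecker_apply, ZMod.card]
  dsimp only
  by_cases h : x₁ - y₁ = x₂ - y₂
  · have hy : y₂ = y₁ + (x₂ - x₁) := by linear_combination h
    rw [if_pos hy, if_pos h, hy]
    have hphase : (x₁ - y₁) * (s⁻¹ * (x₂ - x₁ - t)) =
        -(q * x₁ ^ 2) - s⁻¹ * t * x₁ - (-(q * y₁ ^ 2) - s⁻¹ * t * y₁) +
          (q * x₂ ^ 2 - q * (y₁ + (x₂ - x₁)) ^ 2) := by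
      linear_combination -(x₁ - y₁) * (x₂ - x₁) * hq
    rw [hphase, smul_eq_mul, smul_eq_mul]
    field_simp
  · have hy : ¬ y₂ = y₁ + (x₂ - x₁) := fun hy => h (by linear_combination hy)
    simp [hy, h]

lemma isSeparableState_lineFrame [Fact d.Prime] (h2 : (2 : ZMod d) ≠ 0) (s t : ZMod d) :
    IsSeparableState (((d : ℂ) ^ 2)⁻¹ • (lineFrame d s t * (lineFrame d s t)ᴴ)) := by
  rcases eq_or_ne s 0 with rfl | hs
  · exact isSeparableState_lineFrame_zero t
  · exact isSeparableState_lineFrame_of_ne_zero h2 hs t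

end Separability

/-- For `d` an odd prime and `s, t ∈ Z_d`, with
`c_{j,r} = 1/d` if `r = s·j + t` and `0` otherwise, the state
`ρ = Σ_{j,r} c_{j,r} P̃_{j,r}` is separable, and `d·ρ` is an orthogonal
projection of rank `d`. -/
theorem phase_space_line_state (d : ℕ) [NeZero d] (hd : d.Prime) (hodd : Odd d)
    (s t : ZMod d)
    (ρ : Matrix (ZMod d × ZMod d) (ZMod d × ZMod d) ℂ)
    (hρ : ρ = ∑ j : ZMod d, ∑ r : ZMod d,
        (if r = s * j + t then (d : ℂ)⁻¹ else 0) • Ptilde d j r) :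
    IsSeparableState ρ ∧
    ((d : ℂ) • ρ) * ((d : ℂ) • ρ) = (d : ℂ) • ρ ∧
    ((d : ℂ) • ρ).IsHermitian ∧
    ((d : ℂ) • ρ).rank = d := by
  have : Fact d.Prime := ⟨hd⟩
  have h2 : (2 : ZMod d) ≠ 0 := Ring.two_ne_zero <| by
    rw [ZMod.ringChar_zmod_n]
    rintro rfl
    exact absurd hodd (by decide)
  set B := lineFrame d s t
  have hρB : ρ = ((d : ℂ) ^ 2)⁻¹ • (B * Bᴴ) := hρ.trans (sum_ite_smul_Ptilde_eq_lineFrame s t)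
  have hdρ : (d : ℂ) • ρ = ((d : ℝ) : ℂ)⁻¹ • (B * Bᴴ) := by
    rw [hρB, smul_smul, Complex.ofReal_natCast]
    field_simp
  have hB : Bᴴ * B = ((d : ℝ) : ℂ) • 1 := conjTranspose_lineFrame_mul_self s t
  have hd₀ : (d : ℝ) ≠ 0 := Nat.cast_ne_zero.mpr hd.ne_zero
  rw [hdρ]
  exact ⟨hρB ▸ isSeparableState_lineFrame h2 s t,
    (isIdempotentElem_inv_smul_mul_conjTranspose hB hd₀).eq,
    isHermitian_inv_smul_mul_conjTranspose B d,
    (rank_inv_smul_mul_conjTranspose hB hd₀).trans (ZMod.card d)⟩
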